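/- Let n ∈ ℕ and (τ_k)_{k≥1} be a sequence of pairwise distinct elements of 2^ℕ. Then there is a strictly increasing sequence (k_j)_{j≥1} of natural numbers such that for every F ∈ S_n and all scalars (a_j)_{j∈F}: ‖Σ_{j∈F} a_j e_{τ_{k_j}}‖_n ≥ (1/2)·Σ_{j∈F} |a_j|, and moreover ‖Σ_{j∈F} a_j e_{τ_{k_j}}‖_n = Σ_{j∈F} a_j whenever all a_j ≥ 0. In particular, every sequence of distinct unit vectors in (c00(2^ℕ), ‖·‖_n) has a subsequence generating an ℓ1^n spreading model. -/

import Mathlib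

abbrev Cantor : Type := ℕ → Bool

/- `wedgeLen σ τ` is the length `|σ∧τ| ∈ ℕ∞` of the longest common initial segment
of `σ` and `τ` (`⊤` if `σ = τ`).  Since wedges `σ∧τ`, `σ∧τ'` of a common sequence are
initial segments of that sequence, comparisons `⊑`, `⊏`, `=` between such wedges are
equivalent to `≤`, `<`, `=` between their lengths. -/
open Classical in
noncomputable def wedgeLen (σ τ : Cantor) : ℕ∞ :=
  if h : σ = τ then ⊤ else ((Nat.find (Function.ne_iff.mp h) : ℕ) : ℕ∞)

/-- `GS n F σ m M` : the pair `(F,σ)` belongs to `𝒢ₛ_n` via a derivation attaching the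
values `min(F,σ) = m` and `max(F,σ) = M`. -/
inductive GS : ℕ → Finset Cantor → Cantor → ℕ∞ → ℕ∞ → Prop
  | base (d : ℕ) (τ : Fin (d + 1) → Cantor) (σ : Cantor) (F : Finset Cantor)
      (h1 : ∀ i, σ ≠ τ i)
      (h2 : 0 < wedgeLen σ (τ 0))
      (h3 : ∀ i j : Fin (d + 1), i < j → wedgeLen σ (τ i) < wedgeLen σ (τ j))
      (h4 : ((d + 1 : ℕ) : ℕ∞) ≤ wedgeLen σ (τ 0))
      (hF : ∀ x, x ∈ F ↔ ∃ i, x = τ i) :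
      GS 1 F σ (wedgeLen σ (τ 0)) (wedgeLen σ (τ (Fin.last d)))
  | up (n : ℕ) (F : Finset Cantor) (σ : Cantor) (m M : ℕ∞) :
      GS n F σ m M → GS (n + 1) F σ m M
  | skipped (n : ℕ) (d : ℕ) (Fs : Fin (d + 1) → Finset Cantor)
      (σs : Fin (d + 1) → Cantor) (mins maxs : Fin (d + 1) → ℕ∞)
      (σ : Cantor) (F : Finset Cantor)
      (hGS : ∀ i, GS n (Fs i) (σs i) (mins i) (maxs i))
      (hdisj : ∀ i j : Fin (d + 1), i ≠ j → ∀ x, x ∈ Fs i → x ∉ Fs j)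
      (hne : ∀ i, σ ≠ σs i)
      (h0 : 0 < wedgeLen σ (σs 0))
      (hmono : ∀ i j : Fin (d + 1), i < j → wedgeLen σ (σs i) < wedgeLen σ (σs j))
      (hlt : ∀ i, wedgeLen σ (σs i) < mins i)
      (hd : ((d + 1 : ℕ) : ℕ∞) ≤ wedgeLen σ (σs 0))
      (hF : ∀ x, x ∈ F ↔ ∃ i, x ∈ Fs i) :
      GS (n + 1) F σ (wedgeLen σ (σs 0)) (wedgeLen σ (σs (Fin.last d)))
  | attached (n : ℕ) (d : ℕ) (Fs : Fin (d + 1) → Finset Cantor)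
      (mins maxs : Fin (d + 1) → ℕ∞) (σ : Cantor) (F : Finset Cantor)
      (hGS : ∀ i, GS n (Fs i) σ (mins i) (maxs i))
      (hdisj : ∀ i j : Fin (d + 1), i ≠ j → ∀ x, x ∈ Fs i → x ∉ Fs j)
      (hord : ∀ i : Fin d, maxs i.castSucc < mins i.succ)
      (hd : ((d + 1 : ℕ) : ℕ∞) ≤ mins 0)
      (hF : ∀ x, x ∈ F ↔ ∃ i, x ∈ Fs i) :
      GS (n + 1) F σ (mins 0) (maxs (Fin.last d))

/-- The family `𝒢_n` of finite subsets of the Cantor set. -/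
def Gfam (n : ℕ) : Set (Finset Cantor) :=
  {F | F = ∅ ∨ ∃ σ m M, GS n F σ m M}

/-- The Schreier families `S_n` (for `n ≥ 1`; the value at `0` is a dummy). -/
def Schreier : ℕ → Set (Finset ℕ)
  | 0 => {∅}
  | 1 => {F | ∀ k ∈ F, F.card ≤ k}
  | (n + 2) => {F | F = ∅ ∨ ∃ d : ℕ, ∃ Fs : Fin (d + 1) → Finset ℕ,
      (∀ i, Fs i ∈ Schreier (n + 1) ∧ (Fs i).Nonempty) ∧
      (∀ i : Fin d, ∀ a ∈ Fs i.castSucc, ∀ b ∈ Fs i.succ, a < b) ∧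
      (∀ k ∈ Fs 0, d + 1 ≤ k) ∧
      (∀ x, x ∈ F ↔ ∃ i, x ∈ Fs i)}

/-- The norm `‖·‖_n` on `c₀₀(2^ℕ)`. -/
noncomputable def gnorm (n : ℕ) (x : Cantor →₀ ℝ) : ℝ :=
  sSup {r : ℝ | ∃ F ∈ Gfam n, r = |∑ τ ∈ F, x τ|}

/-!
By compactness of `2^ℕ` the sequence `(τ_k)` has a subsequence converging to some `σ`, and
passing to a further subsequence we may assume that `τ_{k_j} ≠ σ` and that the lengths
`w_j = |σ ∧ τ_{k_j}|` strictly increase. Then `w_j ≥ j`, so for every nonempty `G ∈ S_n` the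
set `{τ_{k_j} : j ∈ G}` lies in `𝒢_n`: a set in `S_1` is a `𝒢ₛ_1`-set at `σ`, and the
successive blocks of a set in `S_{n+1}` give an attached branching of `σ`. As `S_n` is
hereditary, `‖Σ_{j∈F} a_j e_{τ_{k_j}}‖_n` dominates `|Σ_{j∈G} a_j|` for all `G ⊆ F`, in
particular for the sets of positive and of negative coefficients, one of which carries half
of `Σ |a_j|`. The reverse bound `‖x‖_n ≤ ‖x‖_1` holds for every `x`.
-/

open Classical Filter Topology Finset

lemma wedgeLen_eq_top_iff {σ τ : Cantor} : wedgeLen σ τ = ⊤ ↔ σ = τ := by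
  by_cases h : σ = τ <;> simp [wedgeLen, h]

lemma le_wedgeLen {σ τ : Cantor} {m : ℕ} (h : ∀ t < m, σ t = τ t) :
    (m : ℕ∞) ≤ wedgeLen σ τ := by
  unfold wedgeLen
  split
  · exact le_top
  · rw [Nat.cast_le, Nat.le_find_iff]
    exact fun t ht hne => hne (h t ht)

lemma eventually_le_wedgeLen {ι : Type*} {l : Filter ι} {f : ι → Cantor} {σ : Cantor}
    (hf : Tendsto f l (𝓝 σ)) (m : ℕ) : ∀ᶠ i in l, (m : ℕ∞) ≤ wedgeLen σ (f i) := by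
  have hcoord : ∀ t, ∀ᶠ i in l, f i t = σ t := fun t =>
    tendsto_pure.mp (by simpa only [nhds_discrete] using tendsto_pi_nhds.mp hf t)
  filter_upwards [(Set.finite_Iio m).eventually_all.mpr fun t _ => hcoord t] with i hi
  exact le_wedgeLen fun t ht => (hi t ht).symm

theorem exists_subseq_wedgeLen_strictMono {τ : ℕ → Cantor} (hτ : Function.Injective τ) :
    ∃ σ : Cantor, ∃ k w : ℕ → ℕ, StrictMono k ∧ StrictMono w ∧
      ∀ j, wedgeLen σ (τ (k j)) = w j := by
  obtain ⟨σ, φ, hφ, hlim⟩ := CompactSpace.tendsto_subseq τ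
  have hne : ∀ᶠ j in atTop, τ (φ j) ≠ σ := by
    rw [← Nat.cofinite_eq_atTop]
    exact (hτ.comp hφ.injective).tendsto_cofinite.eventually (eventually_cofinite_ne σ)
  obtain ⟨ψ, hψ, hψne⟩ := extraction_of_eventually_atTop hne
  have hlim' := hlim.comp hψ.tendsto_atTop
  let u : ℕ → ℕ := fun j => (wedgeLen σ (τ (φ (ψ j)))).toNat
  have hu : Tendsto u atTop atTop := tendsto_atTop.mpr fun m => by
    filter_upwards [eventually_le_wedgeLen hlim' m] with j hj
    exact ENat.toNat_le_toNat hj (wedgeLen_eq_top_iff.not.mpr (hψne j).symm)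
  obtain ⟨χ, hχ, hwχ⟩ := strictMono_subseq_of_tendsto_atTop hu
  refine ⟨σ, φ ∘ ψ ∘ χ, u ∘ χ, hφ.comp (hψ.comp hχ), hwχ, fun j => ?_⟩
  exact (ENat.natCast_toNat (wedgeLen_eq_top_iff.not.mpr (hψne (χ j)).symm)).symm

lemma lt_of_mem_blocks {d : ℕ} {Fs : Fin (d + 1) → Finset ℕ} (hne : ∀ i, (Fs i).Nonempty)
    (hadj : ∀ i : Fin d, ∀ a ∈ Fs i.castSucc, ∀ b ∈ Fs i.succ, a < b) :
    ∀ ⦃i j : Fin (d + 1)⦄, i < j → ∀ a ∈ Fs i, ∀ b ∈ Fs j, a < b := by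
  intro i j
  induction j using Fin.induction with
  | zero => exact fun h => absurd h (Fin.not_lt_zero i)
  | succ j ih =>
    intro hij a ha b hb
    rcases (Fin.le_castSucc_iff.mpr hij).eq_or_lt with rfl | hlt
    · exact hadj j a ha b hb
    · obtain ⟨c, hc⟩ := hne j.castSucc
      exact (ih hlt a ha c hc).trans (hadj j c hc b hb)

theorem mem_Schreier_of_subset :
    ∀ {n : ℕ} {F G : Finset ℕ}, G ⊆ F → F ∈ Schreier n → G ∈ Schreier n
  | 0, F, G, hGF, hF => by
    simp only [Schreier, Set.mem_singleton_iff] at hF ⊢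
    exact subset_empty.mp (hF ▸ hGF)
  | 1, F, G, hGF, hF => fun k hk => (card_le_card hGF).trans (hF k (hGF hk))
  | n + 2, F, G, hGF, hF => by
    rcases G.eq_empty_or_nonempty with rfl | ⟨g, hg⟩
    · exact Or.inl rfl
    obtain rfl | ⟨d, Fs, hFs, hadj, hfirst, hunion⟩ := hF
    · exact absurd (hGF hg) (notMem_empty g)
    have hlt := lt_of_mem_blocks (fun i => (hFs i).2) hadj
    have hge : ∀ i, ∀ k ∈ Fs i, d + 1 ≤ k := fun i k hk => by
      rcases (Fin.zero_le i).eq_or_lt with rfl | hi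
      · exact hfirst k hk
      · obtain ⟨c, hc⟩ := (hFs 0).2
        exact (hfirst c hc).trans (hlt hi c hc k hk).le
    set I := univ.filter fun i => (G ∩ Fs i).Nonempty
    obtain ⟨d', hd'⟩ : ∃ d', I.card = d' + 1 :=
      Nat.exists_eq_add_one.mpr (card_pos.mpr ⟨_, mem_filter.mpr
        ⟨mem_univ _, g, mem_inter.mpr ⟨hg, ((hunion g).mp (hGF hg)).choose_spec⟩⟩⟩)
    let e := I.orderEmbOfFin hd'
    have he : ∀ i, (G ∩ Fs (e i)).Nonempty := fun i => (mem_filter.mp (I.orderEmbOfFin_mem hd' i)).2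
    refine Or.inr ⟨d', fun i => G ∩ Fs (e i),
      fun i => ⟨mem_Schreier_of_subset inter_subset_right (hFs _).1, he i⟩,
      fun i a ha b hb => hlt (e.strictMono Fin.castSucc_lt_succ) a (mem_inter.mp ha).2 b
        (mem_inter.mp hb).2,
      fun k hk => ?_, fun x => ⟨fun hx => ?_, fun ⟨i, hi⟩ => (mem_inter.mp hi).1⟩⟩
    · have : I.card ≤ d + 1 := (card_le_univ I).trans_eq (Fintype.card_fin _)
      exact (by omega : d' + 1 ≤ d + 1).trans (hge _ k (mem_inter.mp hk).2)
    · obtain ⟨i, hi⟩ := (hunion x).mp (hGF hx)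
      have hiI : i ∈ (I : Set (Fin (d + 1))) :=
        mem_filter.mpr ⟨mem_univ _, x, mem_inter.mpr ⟨hx, hi⟩⟩
      rw [← I.range_orderEmbOfFin hd'] at hiI
      obtain ⟨j, rfl⟩ := hiI
      exact ⟨j, mem_inter.mpr ⟨hx, hi⟩⟩

section Branching

variable {σ : Cantor} {f : ℕ → Cantor} {w : ℕ → ℕ}

lemma exists_GS_one_image (hw : StrictMono w) (hwedge : ∀ j, wedgeLen σ (f j) = w j)
    {G : Finset ℕ} (hG : G ∈ Schreier 1) (hne : G.Nonempty) :
    ∃ a ∈ G, ∃ b ∈ G, GS 1 (G.image f) σ (w a) (w b) := by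
  obtain ⟨d, hd⟩ := Nat.exists_eq_add_one.mpr hne.card_pos
  let e := G.orderEmbOfFin hd
  have hcard : d + 1 ≤ w (e 0) :=
    calc d + 1 = G.card := hd.symm
      _ ≤ e 0 := hG _ (G.orderEmbOfFin_mem hd 0)
      _ ≤ w (e 0) := hw.id_le _
  have hσ : ∀ i, σ ≠ f (e i) := fun i =>
    wedgeLen_eq_top_iff.not.mp (by rw [hwedge]; exact ENat.natCast_ne_top _)
  have hbase := GS.base d (fun i => f (e i)) σ (G.image f) hσ
    (by rw [hwedge]; exact_mod_cast (Nat.succ_pos d).trans_le hcard)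
    (fun i j hij => by rw [hwedge, hwedge]; exact_mod_cast hw (e.strictMono hij))
    (by rw [hwedge]; exact_mod_cast hcard)
    (fun x => by
      refine ⟨fun hx => ?_, fun ⟨i, hx⟩ => mem_image.mpr ⟨_, G.orderEmbOfFin_mem hd i, hx.symm⟩⟩
      obtain ⟨j, hj, rfl⟩ := mem_image.mp hx
      obtain ⟨i, rfl⟩ : j ∈ Set.range e := by rwa [G.range_orderEmbOfFin]
      exact ⟨i, rfl⟩)
  rw [hwedge, hwedge] at hbase
  exact ⟨_, G.orderEmbOfFin_mem hd 0, _, G.orderEmbOfFin_mem hd _, hbase⟩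

theorem exists_GS_image (hf : Function.Injective f) (hw : StrictMono w)
    (hwedge : ∀ j, wedgeLen σ (f j) = w j) :
    ∀ {n : ℕ} {G : Finset ℕ}, G ∈ Schreier n → G.Nonempty →
      ∃ a ∈ G, ∃ b ∈ G, GS n (G.image f) σ (w a) (w b)
  | 0, G, hG, hne => absurd (Set.mem_singleton_iff.mp hG) hne.ne_empty
  | 1, G, hG, hne => exists_GS_one_image hw hwedge hG hne
  | n + 2, G, hG, hne => by
    obtain rfl | ⟨d, Fs, hFs, hadj, hfirst, hunion⟩ := hG
    · exact absurd rfl hne.ne_empty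
    choose a ha b hb hGS using fun i => exists_GS_image hf hw hwedge (hFs i).1 (hFs i).2
    have hdisj : ∀ i j, i ≠ j → ∀ x, x ∈ (Fs i).image f → x ∉ (Fs j).image f := by
      rintro i j hij _ hx hx'
      obtain ⟨p, hp, rfl⟩ := mem_image.mp hx
      obtain ⟨q, hq, hqp⟩ := mem_image.mp hx'
      obtain rfl := hf hqp
      have hlt := lt_of_mem_blocks (fun i => (hFs i).2) hadj
      rcases hij.lt_or_gt with h | h
      · exact lt_irrefl q (hlt h q hp q hq)
      · exact lt_irrefl q (hlt h q hq q hp)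
    have hattached := GS.attached (n + 1) d (fun i => (Fs i).image f) (fun i => w (a i))
      (fun i => w (b i)) σ (G.image f) hGS hdisj
      (fun i => by exact_mod_cast hw (hadj i _ (hb _) _ (ha _)))
      (by exact_mod_cast (hfirst _ (ha 0)).trans (hw.id_le _))
      (fun x => by simp only [mem_image, hunion]; grind)
    exact ⟨a 0, (hunion _).mpr ⟨0, ha 0⟩, b (Fin.last d), (hunion _).mpr ⟨_, hb _⟩, hattached⟩

theorem image_mem_Gfam (hf : Function.Injective f) (hw : StrictMono w)
    (hwedge : ∀ j, wedgeLen σ (f j) = w j) {n : ℕ} {G : Finset ℕ} (hG : G ∈ Schreier n) :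
    G.image f ∈ Gfam n := by
  rcases G.eq_empty_or_nonempty with rfl | hne
  · exact Or.inl (image_empty f)
  · obtain ⟨a, -, b, -, h⟩ := exists_GS_image hf hw hwedge hG hne
    exact Or.inr ⟨σ, _, _, h⟩

end Branching

lemma abs_sum_le_sum_support_abs (x : Cantor →₀ ℝ) (G : Finset Cantor) :
    |∑ t ∈ G, x t| ≤ ∑ t ∈ x.support, |x t| :=
  calc |∑ t ∈ G, x t| ≤ ∑ t ∈ G, |x t| := abs_sum_le_sum_abs _ _
    _ = ∑ t ∈ G ∩ x.support, |x t| :=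
      (sum_subset inter_subset_left fun t _ ht => by simp_all).symm
    _ ≤ ∑ t ∈ x.support, |x t| :=
      sum_le_sum_of_subset_of_nonneg inter_subset_right fun _ _ _ => abs_nonneg _

lemma le_gnorm {n : ℕ} (x : Cantor →₀ ℝ) {G : Finset Cantor} (hG : G ∈ Gfam n) :
    |∑ t ∈ G, x t| ≤ gnorm n x :=
  le_csSup ⟨_, by rintro r ⟨G, -, rfl⟩; exact abs_sum_le_sum_support_abs x G⟩ ⟨G, hG, rfl⟩

lemma gnorm_le {n : ℕ} {x : Cantor →₀ ℝ} {C : ℝ} (h : ∀ G ∈ Gfam n, |∑ t ∈ G, x t| ≤ C) :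
    gnorm n x ≤ C :=
  csSup_le ⟨_, ∅, Or.inl rfl, rfl⟩ fun _ ⟨G, hG, hr⟩ => hr ▸ h G hG

lemma sum_apply_sum_single {ι α M : Type*} [AddCommMonoid M] [DecidableEq α] (f : ι → α)
    (a : ι → M) (F : Finset ι) (G : Finset α) :
    ∑ t ∈ G, (∑ j ∈ F, Finsupp.single (f j) (a j)) t = ∑ j ∈ F with f j ∈ G, a j := by
  simp only [Finsupp.finsetSum_apply, Finsupp.single_apply]
  rw [sum_comm, sum_filter]
  exact sum_congr rfl fun j _ => sum_ite_eq _ _ _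

lemma sum_image_apply_sum_single {ι α M : Type*} [AddCommMonoid M] [DecidableEq α]
    {f : ι → α} (hf : Function.Injective f) (a : ι → M) {F G : Finset ι} (hGF : G ⊆ F) :
    ∑ t ∈ G.image f, (∑ j ∈ F, Finsupp.single (f j) (a j)) t = ∑ j ∈ G, a j := by
  rw [sum_apply_sum_single, filter_congr fun j _ => hf.mem_finset_image, filter_mem_eq_inter,
    inter_eq_right.mpr hGF]

lemma exists_subset_half_sum_abs_le {ι : Type*} (F : Finset ι) (a : ι → ℝ) :
    ∃ G ⊆ F, (1 / 2) * ∑ j ∈ F, |a j| ≤ |∑ j ∈ G, a j| := by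
  have hpos : ∑ j ∈ F with 0 ≤ a j, |a j| = |∑ j ∈ F with 0 ≤ a j, a j| := by
    rw [abs_of_nonneg (sum_nonneg fun j hj => (mem_filter.mp hj).2)]
    exact sum_congr rfl fun j hj => abs_of_nonneg (mem_filter.mp hj).2
  have hneg : ∑ j ∈ F with ¬0 ≤ a j, |a j| = |∑ j ∈ F with ¬0 ≤ a j, a j| := by
    rw [abs_of_nonpos (sum_nonpos fun j hj => (not_le.mp (mem_filter.mp hj).2).le),
      ← sum_neg_distrib]
    exact sum_congr rfl fun j hj => abs_of_neg (not_le.mp (mem_filter.mp hj).2)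
  have hsplit := sum_filter_add_sum_filter_not F (fun j => 0 ≤ a j) fun j => |a j|
  rcases le_total (∑ j ∈ F with 0 ≤ a j, |a j|) (∑ j ∈ F with ¬0 ≤ a j, |a j|) with h | h
  · exact ⟨F.filter fun j => ¬0 ≤ a j, filter_subset _ _, by linarith⟩
  · exact ⟨F.filter fun j => 0 ≤ a j, filter_subset _ _, by linarith⟩

theorem gnorm_ell1n_spreading_model_general (n : ℕ) (τ : ℕ → Cantor)
    (hτ : Function.Injective τ) :
    ∃ k : ℕ → ℕ, StrictMono k ∧
      ∀ F ∈ Schreier n, ∀ a : ℕ → ℝ,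
        (1 / 2) * (∑ j ∈ F, |a j|) ≤
            gnorm n (∑ j ∈ F, Finsupp.single (τ (k j)) (a j)) ∧
        ((∀ j ∈ F, 0 ≤ a j) →
          gnorm n (∑ j ∈ F, Finsupp.single (τ (k j)) (a j)) = ∑ j ∈ F, a j) := by
  obtain ⟨σ, k, w, hk, hw, hwedge⟩ := exists_subseq_wedgeLen_strictMono hτ
  have hf : Function.Injective fun j => τ (k j) := hτ.comp hk.injective
  refine ⟨k, hk, fun F hF a => ?_⟩
  have hlower : ∀ G ⊆ F, |∑ j ∈ G, a j| ≤ gnorm n (∑ j ∈ F, Finsupp.single (τ (k j)) (a j)) := by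
    intro G hGF
    rw [← sum_image_apply_sum_single hf a hGF]
    exact le_gnorm _ (image_mem_Gfam hf hw hwedge (mem_Schreier_of_subset hGF hF))
  have hupper : gnorm n (∑ j ∈ F, Finsupp.single (τ (k j)) (a j)) ≤ ∑ j ∈ F, |a j| :=
    gnorm_le fun G _ => by
      rw [sum_apply_sum_single]
      exact (abs_sum_le_sum_abs _ _).trans
        (sum_le_sum_of_subset_of_nonneg (filter_subset _ _) fun _ _ _ => abs_nonneg _)
  refine ⟨?_, fun ha => ?_⟩
  · obtain ⟨G, hGF, hG⟩ := exists_subset_half_sum_abs_le F a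
    exact hG.trans (hlower G hGF)
  · have habs : ∑ j ∈ F, |a j| = ∑ j ∈ F, a j := sum_congr rfl fun j hj => abs_of_nonneg (ha j hj)
    refine le_antisymm (hupper.trans_eq habs) ?_
    simpa only [abs_of_nonneg (sum_nonneg ha)] using hlower F subset_rfl

theorem gnorm_ell1n_spreading_model (n : ℕ) (hn : 1 ≤ n) (τ : ℕ → Cantor)
    (hτ : Function.Injective τ) :
    ∃ k : ℕ → ℕ, StrictMono k ∧
      ∀ F ∈ Schreier n, ∀ a : ℕ → ℝ,
        (1 / 2) * (∑ j ∈ F, |a j|) ≤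
            gnorm n (∑ j ∈ F, Finsupp.single (τ (k j)) (a j)) ∧
        ((∀ j ∈ F, 0 ≤ a j) →
          gnorm n (∑ j ∈ F, Finsupp.single (τ (k j)) (a j)) = ∑ j ∈ F, a j) :=
  gnorm_ell1n_spreading_model_general n τ hτ
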